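/- (Growth bound on the denominators.) For every integer k ≥ 1 and every Λ > 0 there exists a constant C > 0 such that for all λ ∈ ℂ with |λ| ≤ Λ, all z ∈ ℂ and all q_1,…,q_k ∈ ℝ: |A_k(z)|² ≤ C · (1 + |z|²) · ∏_{i=1}^{k} (1 + q_i²), where A_0(z) = 1, A_1(z) = z + 1 + λ − q_1, A_k(z) = (1 + λ − q_k)A_{k−1}(z) − A_{k−2}(z). -/

import Mathlib

noncomputable section

/-- The denominator sequence: `A_0 = 1`, `A_1 = z + 1 + λ − q_1`,
`A_k = (1 + λ − q_k)A_{k−1} − A_{k−2}`, where `q_k` is `q (k-1)`. -/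
def denomA (lam : ℂ) (q : ℕ → ℝ) : ℕ → ℂ → ℂ
  | 0, _ => 1
  | 1, z => z + 1 + lam - (q 0 : ℂ)
  | (k+2), z => (1 + lam - (q (k+1) : ℂ)) * denomA lam q (k+1) z - denomA lam q k z

/-!
Each step of the recurrence `A_{n+2} = c_{n+1} A_{n+1} - A_n` gives
`|A_{n+2}|² ≤ 2|c_{n+1}|²|A_{n+1}|² + 2|A_n|²`, and `|1 + λ - q|² ≤ K (1 + q²)` with `K`
depending only on `Λ`. So each step costs a fixed factor `M = 2K + 2` and one new weight
`1 + q²`; the two-step induction closes because `M² ≥ 2KM + 2`.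
-/

open Finset

lemma sq_norm_add_le {E : Type*} [SeminormedAddGroup E] (x y : E) :
    ‖x + y‖ ^ 2 ≤ 2 * (‖x‖ ^ 2 + ‖y‖ ^ 2) :=
  (pow_le_pow_left₀ (norm_nonneg _) (norm_add_le x y) 2).trans add_sq_le

lemma sq_norm_sub_le {E : Type*} [SeminormedAddGroup E] (x y : E) :
    ‖x - y‖ ^ 2 ≤ 2 * (‖x‖ ^ 2 + ‖y‖ ^ 2) :=
  (pow_le_pow_left₀ (norm_nonneg _) (norm_sub_le x y) 2).trans add_sq_le

section ThreeTermRecurrence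

variable {R : Type*} [SeminormedRing R] {a c : ℕ → R} {w : ℕ → ℝ} {K B : ℝ}

lemma sq_norm_le_of_recurrence_step (hw : ∀ n, 1 ≤ w n) (hK : 0 ≤ K) (hB : 0 ≤ B)
    (hc : ∀ n, ‖c n‖ ^ 2 ≤ K * w n) (hrec : ∀ n, a (n + 2) = c (n + 1) * a (n + 1) - a n)
    (n : ℕ) (hn : ‖a n‖ ^ 2 ≤ (2 * K + 2) ^ n * B * ∏ i ∈ range n, w i)
    (hn1 : ‖a (n + 1)‖ ^ 2 ≤ (2 * K + 2) ^ (n + 1) * B * ∏ i ∈ range (n + 1), w i) :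
    ‖a (n + 2)‖ ^ 2 ≤ (2 * K + 2) ^ (n + 2) * B * ∏ i ∈ range (n + 2), w i := by
  rw [prod_range_succ] at hn1
  rw [prod_range_succ, prod_range_succ]
  set M := 2 * K + 2
  set P := ∏ i ∈ range n, w i
  have hP : 0 ≤ P := prod_nonneg fun i _ => zero_le_one.trans (hw i)
  have hPw : P ≤ P * w n * w (n + 1) := by
    rw [mul_assoc]; exact le_mul_of_one_le_right hP (one_le_mul_of_one_le_of_one_le (hw n) (hw _))
  have hBQ : 0 ≤ B * (P * w n * w (n + 1)) := mul_nonneg hB (hP.trans hPw)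
  have hM : 2 * K * M + 2 ≤ M ^ 2 := by nlinarith
  have hcoef : ‖c (n + 1) * a (n + 1)‖ ^ 2 ≤ K * w (n + 1) * (M ^ (n + 1) * B * (P * w n)) :=
    calc ‖c (n + 1) * a (n + 1)‖ ^ 2 ≤ ‖c (n + 1)‖ ^ 2 * ‖a (n + 1)‖ ^ 2 := by
          rw [← mul_pow]; exact pow_le_pow_left₀ (norm_nonneg _) (norm_mul_le _ _) 2
      _ ≤ K * w (n + 1) * (M ^ (n + 1) * B * (P * w n)) :=
          mul_le_mul (hc _) hn1 (sq_nonneg _) (mul_nonneg hK (zero_le_one.trans (hw _)))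
  calc ‖a (n + 2)‖ ^ 2
      ≤ 2 * (‖c (n + 1) * a (n + 1)‖ ^ 2 + ‖a n‖ ^ 2) := hrec n ▸ sq_norm_sub_le _ _
    _ ≤ 2 * (K * w (n + 1) * (M ^ (n + 1) * B * (P * w n)) + M ^ n * B * P) := by gcongr
    _ = 2 * K * M ^ (n + 1) * (B * (P * w n * w (n + 1))) + 2 * M ^ n * (B * P) := by ring
    _ ≤ 2 * K * M ^ (n + 1) * (B * (P * w n * w (n + 1)))
          + 2 * M ^ n * (B * (P * w n * w (n + 1))) := by gcongr
    _ = M ^ n * (2 * K * M + 2) * (B * (P * w n * w (n + 1))) := by ring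
    _ ≤ M ^ n * M ^ 2 * (B * (P * w n * w (n + 1))) := by gcongr
    _ = M ^ (n + 2) * B * (P * w n * w (n + 1)) := by ring

theorem sq_norm_le_of_recurrence (hw : ∀ n, 1 ≤ w n) (hc : ∀ n, ‖c n‖ ^ 2 ≤ K * w n)
    (hrec : ∀ n, a (n + 2) = c (n + 1) * a (n + 1) - a n)
    (h0 : ‖a 0‖ ^ 2 ≤ B) (h1 : ‖a 1‖ ^ 2 ≤ (2 * K + 2) * B * w 0) (n : ℕ) :
    ‖a n‖ ^ 2 ≤ (2 * K + 2) ^ n * B * ∏ i ∈ range n, w i := by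
  have hK : 0 ≤ K := nonneg_of_mul_nonneg_left ((sq_nonneg _).trans (hc 0)) (by linarith [hw 0])
  have hB : 0 ≤ B := (sq_nonneg _).trans h0
  induction n using Nat.twoStepInduction with
  | zero => simpa using h0
  | one => simpa using h1
  | more n hn hn1 => exact sq_norm_le_of_recurrence_step hw hK hB hc hrec n hn hn1

end ThreeTermRecurrence

lemma sq_norm_one_add_sub_ofReal_le {lam : ℂ} {Λ : ℝ} (hlam : ‖lam‖ ≤ Λ) (x : ℝ) :
    ‖1 + lam - x‖ ^ 2 ≤ (2 * (1 + Λ) ^ 2 + 2) * (1 + x ^ 2) := by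
  have h1 : ‖1 + lam‖ ^ 2 ≤ (1 + Λ) ^ 2 :=
    pow_le_pow_left₀ (norm_nonneg _) ((norm_add_le _ _).trans (by simpa using hlam)) 2
  have hx : ‖(x : ℂ)‖ ^ 2 = x ^ 2 := by rw [Complex.norm_real, Real.norm_eq_abs, sq_abs]
  nlinarith [sq_norm_sub_le (1 + lam) (x : ℂ), sq_nonneg x, sq_nonneg (1 + Λ)]

lemma sq_norm_denomA_one_le {lam : ℂ} {Λ : ℝ} (hlam : ‖lam‖ ≤ Λ) (q : ℕ → ℝ) (z : ℂ) :
    ‖denomA lam q 1 z‖ ^ 2 ≤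
      (2 * (2 * (1 + Λ) ^ 2 + 2) + 2) * (1 + ‖z‖ ^ 2) * (1 + q 0 ^ 2) := by
  have hsplit : denomA lam q 1 z = z + (1 + lam - q 0) := by simp only [denomA]; ring
  rw [hsplit]
  nlinarith [sq_norm_add_le z (1 + lam - q 0), sq_norm_one_add_sub_ofReal_le hlam (q 0),
    sq_nonneg ‖z‖, sq_nonneg (q 0), sq_nonneg (1 + Λ), mul_nonneg (sq_nonneg ‖z‖) (sq_nonneg (q 0))]

theorem statement16_general (k : ℕ) (Λ : ℝ) :
    ∃ C > (0 : ℝ), ∀ lam : ℂ, ‖lam‖ ≤ Λ → ∀ z : ℂ, ∀ q : ℕ → ℝ,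
      ‖denomA lam q k z‖ ^ 2 ≤
        C * (1 + ‖z‖ ^ 2) * ∏ i ∈ Finset.range k, (1 + q i ^ 2) := by
  refine ⟨(2 * (2 * (1 + Λ) ^ 2 + 2) + 2) ^ k, by positivity, fun lam hlam z q => ?_⟩
  exact sq_norm_le_of_recurrence (a := fun n => denomA lam q n z) (c := fun n => 1 + lam - q n)
    (fun n => le_add_of_nonneg_right (sq_nonneg (q n)))
    (fun n => sq_norm_one_add_sub_ofReal_le hlam (q n)) (fun n => rfl)
    (by simp [denomA]) (sq_norm_denomA_one_le hlam q z) k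

/-- **growth bound on the denominators.** For every `k ≥ 1` and
`Λ > 0` there is `C > 0` such that for all `|λ| ≤ Λ`, all `z ∈ ℂ` and all
`q_1,…,q_k ∈ ℝ`: `|A_k(z)|² ≤ C·(1+|z|²)·∏_{i=1}^k (1+q_i²)`. -/
theorem statement16 (k : ℕ) (hk : 1 ≤ k) (Λ : ℝ) (hΛ : 0 < Λ) :
    ∃ C > (0 : ℝ), ∀ lam : ℂ, ‖lam‖ ≤ Λ → ∀ z : ℂ, ∀ q : ℕ → ℝ,
      ‖denomA lam q k z‖ ^ 2 ≤
        C * (1 + ‖z‖ ^ 2) * ∏ i ∈ Finset.range k, (1 + q i ^ 2) :=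
  statement16_general k Λ

end
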